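/- arXiv:1807.06812 — 2 statements merged into one kernel-verified Lean document; each statement's English description precedes it below -/
import Mathlib

section
/- Let m ≥ 1, let x_1,…,x_m ∈ ℝ, y ∈ ℝ, and h ∈ ℝ. Let [X] be the m×m tridiagonal matrix with diagonal entries x_1,…,x_m and all sub- and superdiagonal entries equal to h, and let H be the (2m+1)×(2m+1) tridiagonal matrix with diagonal entries (x_m, x_{m−1}, …, x_1, y, x_1, x_2, …, x_m) and all sub- and superdiagonal entries equal to h. Then every eigenvalue of [X] is an eigenvalue of H, i.e., σ([X]) ⊆ σ(H) = σ([X^{-1}YX]). -/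
/-- The `n × n` real symmetric tridiagonal matrix with diagonal entries `v 0, …, v (n-1)`
and all sub- and superdiagonal entries equal to the constant hopping `h`. -/
def tridiag (n : ℕ) (v : Fin n → ℝ) (h : ℝ) : Matrix (Fin n) (Fin n) ℝ :=
  Matrix.of fun i j =>
    if i = j then v i else if i.val + 1 = j.val ∨ j.val + 1 = i.val then h else 0

lemma tridiag_mulVec (n : ℕ) (v : Fin n → ℝ) (h : ℝ) (ψ : Fin n → ℝ) (i : Fin n) :
    (tridiag n v h).mulVec ψ i =
      v i * ψ i + (if hp : 0 < i.val then h * ψ ⟨i.val - 1, by omega⟩ else 0) +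
      (if hs : i.val + 1 < n then h * ψ ⟨i.val + 1, hs⟩ else 0) := by
  unfold Matrix.mulVec dotProduct tridiag
  simp only [Matrix.of_apply]
  have key : ∀ j : Fin n,
      (if i = j then v i else if i.val + 1 = j.val ∨ j.val + 1 = i.val then h else 0) * ψ j =
      (if j = i then v i * ψ i else 0) + (if j.val + 1 = i.val then h * ψ j else 0) +
      (if j.val = i.val + 1 then h * ψ j else 0) := by
    intro j
    by_cases hji : j = i
    · subst hji
      rw [if_pos rfl, if_pos rfl, if_neg (by omega), if_neg (by omega)]; ring
    · rw [if_neg (fun hh => hji hh.symm), if_neg hji]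
      by_cases h1 : j.val + 1 = i.val
      · rw [if_pos (Or.inr h1), if_pos h1, if_neg (by omega)]; ring
      · by_cases h2 : j.val = i.val + 1
        · rw [if_pos (Or.inl h2.symm), if_neg h1, if_pos h2]; ring
        · rw [if_neg (by omega), if_neg h1, if_neg h2]; ring
  rw [Finset.sum_congr rfl (fun j _ => key j)]
  rw [Finset.sum_add_distrib, Finset.sum_add_distrib]
  congr 1
  congr 1
  · rw [Finset.sum_eq_single i]
    · rw [if_pos rfl]
    · intro j _ hne; rw [if_neg hne]
    · intro habs; exact absurd (Finset.mem_univ _) habs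
  · -- pred sum
    by_cases hp : 0 < i.val
    · rw [dif_pos hp]
      rw [Finset.sum_eq_single (⟨i.val - 1, by omega⟩ : Fin n)]
      · rw [if_pos (show i.val - 1 + 1 = i.val by omega)]
      · intro j _ hne
        refine if_neg (fun hc => hne (Fin.ext ?_))
        simp only [Fin.val_mk]; omega
      · intro habs; exact absurd (Finset.mem_univ _) habs
    · rw [dif_neg hp]
      exact Finset.sum_eq_zero (fun j _ => if_neg (by omega))
  · by_cases hs : i.val + 1 < n
    · rw [dif_pos hs]
      rw [Finset.sum_eq_single (⟨i.val + 1, hs⟩ : Fin n)]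
      · rw [if_pos rfl]
      · intro j _ hne
        refine if_neg (fun hc => hne (Fin.ext ?_))
        simp only [Fin.val_mk]; omega
      · intro habs; exact absurd (Finset.mem_univ _) habs
    · rw [dif_neg hs]
      exact Finset.sum_eq_zero (fun j _ => if_neg (by have := j.isLt; omega))

/-- The reflection-symmetric word `X⁻¹ Y X` of length `2m+1`: the on-site potentials
`(x_m, …, x_1, y, x_1, …, x_m)` (here `x` is 0-based, so `x_k` above is `x (k-1)`). -/
def symWord (m : ℕ) (x : Fin m → ℝ) (y : ℝ) : Fin (2 * m + 1) → ℝ := fun i =>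
  if h1 : i.val < m then x ⟨m - 1 - i.val, by omega⟩
  else if h2 : i.val = m then y
  else x ⟨i.val - m - 1, by have := i.isLt; omega⟩

/-- The antisymmetric extension of `ψ` to `2m+1` sites. -/
def aext (m : ℕ) (ψ : Fin m → ℝ) : Fin (2 * m + 1) → ℝ := fun i =>
  if h1 : i.val < m then -ψ ⟨m - 1 - i.val, by omega⟩
  else if h2 : i.val = m then 0
  else ψ ⟨i.val - m - 1, by have := i.isLt; omega⟩

lemma aext_lt {m : ℕ} (ψ : Fin m → ℝ) (a : ℕ) (ha : a < m) (ha2 : a < 2 * m + 1) :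
    aext m ψ ⟨a, ha2⟩ = -ψ ⟨m - 1 - a, by omega⟩ := by
  unfold aext; rw [dif_pos ha]

lemma aext_mid {m : ℕ} (ψ : Fin m → ℝ) (a : ℕ) (ha : a = m) (ha2 : a < 2 * m + 1) :
    aext m ψ ⟨a, ha2⟩ = 0 := by
  unfold aext; rw [dif_neg (show ¬ a < m by omega), dif_pos ha]

lemma aext_gt {m : ℕ} (ψ : Fin m → ℝ) (a : ℕ) (ha : m < a) (ha2 : a < 2 * m + 1) :
    aext m ψ ⟨a, ha2⟩ = ψ ⟨a - m - 1, by omega⟩ := by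
  unfold aext; rw [dif_neg (show ¬ a < m by omega), dif_neg (show ¬ a = m by omega)]

lemma symWord_lt {m : ℕ} (x : Fin m → ℝ) (y : ℝ) (a : ℕ) (ha : a < m) (ha2 : a < 2 * m + 1) :
    symWord m x y ⟨a, ha2⟩ = x ⟨m - 1 - a, by omega⟩ := by
  unfold symWord; rw [dif_pos ha]

lemma symWord_mid {m : ℕ} (x : Fin m → ℝ) (y : ℝ) (a : ℕ) (ha : a = m) (ha2 : a < 2 * m + 1) :
    symWord m x y ⟨a, ha2⟩ = y := by
  unfold symWord; rw [dif_neg (show ¬ a < m by omega), dif_pos ha]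

lemma symWord_gt {m : ℕ} (x : Fin m → ℝ) (y : ℝ) (a : ℕ) (ha : m < a) (ha2 : a < 2 * m + 1) :
    symWord m x y ⟨a, ha2⟩ = x ⟨a - m - 1, by omega⟩ := by
  unfold symWord; rw [dif_neg (show ¬ a < m by omega), dif_neg (show ¬ a = m by omega)]

/-- Every eigenvalue of the tridiagonal Hamiltonian `[X]` of the word
`X = x_1 … x_m` is also an eigenvalue of the tridiagonal Hamiltonian `[X⁻¹YX]` of the
reflection-symmetric word `X` reversed, a central site `y`, and `X`, i.e.
`σ([X]) ⊆ σ([X⁻¹YX])`. -/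
theorem stmt3 (m : ℕ) (hm : 1 ≤ m) (x : Fin m → ℝ) (y h : ℝ) (lam : ℝ)
    (hlam : ∃ ψ : Fin m → ℝ, ψ ≠ 0 ∧ (tridiag m x h).mulVec ψ = lam • ψ) :
    ∃ ψ : Fin (2 * m + 1) → ℝ, ψ ≠ 0 ∧
      (tridiag (2 * m + 1) (symWord m x y) h).mulVec ψ = lam • ψ := by
  obtain ⟨ψ, hψne, hψ⟩ := hlam
  have heig : ∀ (a : ℕ) (ha : a < m), x ⟨a, ha⟩ * ψ ⟨a, ha⟩ +
      (if hp : 0 < a then h * ψ ⟨a - 1, by omega⟩ else 0) +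
      (if hs : a + 1 < m then h * ψ ⟨a + 1, hs⟩ else 0) = lam * ψ ⟨a, ha⟩ := by
    intro a ha
    have := congrFun hψ ⟨a, ha⟩
    rw [tridiag_mulVec] at this
    simpa using this
  refine ⟨aext m ψ, ?_, ?_⟩
  · -- nonzero
    obtain ⟨j, hj⟩ := Function.ne_iff.mp hψne
    intro hcontra
    apply hj
    have h0 : aext m ψ ⟨m + 1 + j.val, by have := j.isLt; omega⟩ = 0 := by
      rw [hcontra]; rfl
    rw [aext_gt ψ _ (by omega)] at h0
    simp only [Pi.zero_apply]
    rw [← h0]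
    congr 1
    have := j.isLt
    exact Fin.ext (by simp only [Fin.val_mk]; omega)
  · funext i
    rw [tridiag_mulVec]
    simp only [Pi.smul_apply, smul_eq_mul]
    obtain ⟨iv, hiv⟩ := i
    simp only [Fin.val_mk]
    rcases lt_trichotomy iv m with hi | hi | hi
    · -- left half
      rw [symWord_lt x y iv hi, aext_lt ψ iv hi]
      have hs2 : iv + 1 < 2 * m + 1 := by omega
      rw [dif_pos hs2]
      have hA : (if hp : 0 < iv then h * aext m ψ ⟨iv - 1, by omega⟩ else 0)
          = -(if hs : (m - 1 - iv) + 1 < m then h * ψ ⟨(m - 1 - iv) + 1, hs⟩ else 0) := by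
        by_cases hp : 0 < iv
        · rw [dif_pos hp, aext_lt ψ _ (by omega), dif_pos (by omega)]
          rw [show (⟨m - 1 - (iv - 1), by omega⟩ : Fin m)
              = ⟨(m - 1 - iv) + 1, by omega⟩ from by simp only [Fin.mk.injEq]; omega]
          ring
        · rw [dif_neg hp, dif_neg (by omega)]; ring
      have hB : h * aext m ψ ⟨iv + 1, hs2⟩
          = -(if hp : 0 < m - 1 - iv then h * ψ ⟨m - 1 - iv - 1, by omega⟩ else 0) := by
        by_cases hq : iv + 1 < m
        · rw [aext_lt ψ _ hq, dif_pos (by omega)]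
          rw [show (⟨m - 1 - (iv + 1), by omega⟩ : Fin m)
              = ⟨m - 1 - iv - 1, by omega⟩ from by simp only [Fin.mk.injEq]; omega]
          ring
        · rw [aext_mid ψ _ (by omega), dif_neg (by omega)]; ring
      rw [hA, hB]
      linear_combination -heig (m - 1 - iv) (by omega)
    · -- middle
      rw [symWord_mid x y iv hi, aext_mid ψ iv hi]
      have hp2 : 0 < iv := by omega
      have hs2 : iv + 1 < 2 * m + 1 := by omega
      rw [dif_pos hp2, dif_pos hs2]
      rw [aext_lt ψ _ (by omega), aext_gt ψ _ (by omega)]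
      rw [show (⟨m - 1 - (iv - 1), by omega⟩ : Fin m) = ⟨0, by omega⟩ from by
        simp only [Fin.mk.injEq]; omega]
      rw [show (⟨iv + 1 - m - 1, by omega⟩ : Fin m) = ⟨0, by omega⟩ from by
        simp only [Fin.mk.injEq]; omega]
      ring
    · -- right half
      rw [symWord_gt x y iv hi, aext_gt ψ iv hi]
      have hp2 : 0 < iv := by omega
      rw [dif_pos hp2]
      have hA : h * aext m ψ ⟨iv - 1, by omega⟩
          = (if hp : 0 < iv - m - 1 then h * ψ ⟨iv - m - 1 - 1, by omega⟩ else 0) := by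
        by_cases hq : m < iv - 1
        · rw [aext_gt ψ _ hq, dif_pos (by omega)]
          exact congrArg (h * ψ ·) (Fin.ext (by simp only [Fin.val_mk]; omega))
        · rw [aext_mid ψ _ (by omega), dif_neg (by omega)]; ring
      have hB : (if hs : iv + 1 < 2 * m + 1 then h * aext m ψ ⟨iv + 1, hs⟩ else 0)
          = (if hs : (iv - m - 1) + 1 < m then h * ψ ⟨(iv - m - 1) + 1, hs⟩ else 0) := by
        by_cases hs : iv + 1 < 2 * m + 1
        · rw [dif_pos hs, aext_gt ψ _ (by omega), dif_pos (by omega)]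
          exact congrArg (h * ψ ·) (Fin.ext (by simp only [Fin.val_mk]; omega))
        · rw [dif_neg hs, dif_neg (by omega)]
      rw [hA, hB]
      linear_combination heig (iv - m - 1) (by omega)
end

section
/- Let m ≥ 1, x_1,…,x_m ∈ ℝ, y ∈ ℝ, h ∈ ℝ. Let [X] be the m×m tridiagonal matrix with diagonal x_1,…,x_m and constant off-diagonal h, and let H be the (2m+1)×(2m+1) tridiagonal matrix with diagonal (x_m,…,x_1, y, x_1,…,x_m) and constant off-diagonal h. Define B₊ ∈ ℝ^{(m+1)×(m+1)} as the matrix whose top-left m×m block is the tridiagonal matrix with diagonal (x_m, x_{m−1}, …, x_1) and constant off-diagonal h, whose (m+1, m+1) entry is y, whose (m, m+1) and (m+1, m) entries both equal √2·h, and all of whose other entries vanish. Then the characteristic polynomial of H factors as the product of the characteristic polynomials of [X] and of B₊; in particular σ(H) = σ([X]) ∪ σ(B₊). -/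
/-- The `(m+1) × (m+1)` matrix `B₊`: its top-left `m × m` block is the tridiagonal
matrix with diagonal `(x_m, …, x_1)` and constant off-diagonal `h`, its `(m+1,m+1)`
entry is `y`, its `(m,m+1)` and `(m+1,m)` entries are `√2·h`, and all other entries
vanish (1-based description; indices here are 0-based). -/
noncomputable def Bplus (m : ℕ) (x : Fin m → ℝ) (y h : ℝ) : Matrix (Fin (m + 1)) (Fin (m + 1)) ℝ :=
  Matrix.of fun i j =>
    if i = j then (if hi : i.val < m then x ⟨m - 1 - i.val, by omega⟩ else y)
    else if i.val + 1 = j.val ∨ j.val + 1 = i.val then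
      (if i.val = m ∨ j.val = m then Real.sqrt 2 * h else h)
    else 0


open Matrix

noncomputable def Pmat (m : ℕ) : Matrix (Fin (2 * m + 1)) (Fin (2 * m + 1)) ℝ :=
  Matrix.of fun i j =>
    if j.val < m then
      (if i.val = m + 1 + j.val then (Real.sqrt 2)⁻¹
       else if i.val + j.val + 1 = m then -(Real.sqrt 2)⁻¹ else 0)
    else if j.val < 2 * m then
      (if i.val + j.val = 3 * m then (Real.sqrt 2)⁻¹
       else if i.val + m = j.val then (Real.sqrt 2)⁻¹ else 0)
    else (if i.val = m then 1 else 0)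

noncomputable def Dmat (m : ℕ) (x : Fin m → ℝ) (y h : ℝ) :
    Matrix (Fin (2 * m + 1)) (Fin (2 * m + 1)) ℝ :=
  Matrix.of fun i j =>
    if hi : i.val < m then
      (if hj : j.val < m then tridiag m x h ⟨i, hi⟩ ⟨j, hj⟩ else 0)
    else if hj : j.val < m then 0
    else Bplus m x y h ⟨i.val - m, by have := i.isLt; omega⟩ ⟨j.val - m, by have := j.isLt; omega⟩

lemma Prow_lt {m iv : ℕ} (hi : iv < m) (hiv : iv < 2*m+1) (k : Fin (2*m+1))
    (h1 : k.val ≠ m - 1 - iv) (h2 : k.val ≠ m + iv) :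
    Pmat m ⟨iv, hiv⟩ k = 0 := by
  rcases k with ⟨kv, hkv⟩
  simp only [Fin.val_mk] at h1 h2 ⊢
  simp only [Pmat, Matrix.of_apply]
  split_ifs <;> first | rfl | (exfalso; omega)

lemma Prow_mid {m iv : ℕ} (hi1 : ¬ iv < m) (hi2 : ¬ m < iv) (hiv : iv < 2*m+1) (k : Fin (2*m+1))
    (h1 : k.val ≠ 2*m) :
    Pmat m ⟨iv, hiv⟩ k = 0 := by
  rcases k with ⟨kv, hkv⟩
  simp only [Fin.val_mk] at h1 ⊢
  simp only [Pmat, Matrix.of_apply]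
  split_ifs <;> first | rfl | (exfalso; omega)

lemma Prow_gt {m iv : ℕ} (hi : m < iv) (hiv : iv < 2*m+1) (k : Fin (2*m+1))
    (h1 : k.val ≠ iv - m - 1) (h2 : k.val ≠ 3*m - iv) :
    Pmat m ⟨iv, hiv⟩ k = 0 := by
  rcases k with ⟨kv, hkv⟩
  simp only [Fin.val_mk] at h1 h2 ⊢
  simp only [Pmat, Matrix.of_apply]
  split_ifs <;> first | rfl | (exfalso; omega)

lemma Pcol_lt {m jv : ℕ} (hj : jv < m) (hjv : jv < 2*m+1) (k : Fin (2*m+1))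
    (h1 : k.val ≠ m + 1 + jv) (h2 : k.val ≠ m - 1 - jv) :
    Pmat m k ⟨jv, hjv⟩ = 0 := by
  rcases k with ⟨kv, hkv⟩
  simp only [Fin.val_mk] at h1 h2 ⊢
  simp only [Pmat, Matrix.of_apply]
  split_ifs <;> first | rfl | (exfalso; omega)

lemma Pcol_mid {m jv : ℕ} (hj1 : ¬ jv < m) (hj2 : jv < 2*m) (hjv : jv < 2*m+1) (k : Fin (2*m+1))
    (h1 : k.val ≠ 3*m - jv) (h2 : k.val ≠ jv - m) :
    Pmat m k ⟨jv, hjv⟩ = 0 := by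
  rcases k with ⟨kv, hkv⟩
  simp only [Fin.val_mk] at h1 h2 ⊢
  simp only [Pmat, Matrix.of_apply]
  split_ifs <;> first | rfl | (exfalso; omega)

lemma Pcol_top {m jv : ℕ} (hj2 : ¬ jv < 2*m) (hjv : jv < 2*m+1) (k : Fin (2*m+1))
    (h1 : k.val ≠ m) :
    Pmat m k ⟨jv, hjv⟩ = 0 := by
  rcases k with ⟨kv, hkv⟩
  simp only [Fin.val_mk] at h1 ⊢
  simp only [Pmat, Matrix.of_apply]
  split_ifs <;> first | rfl | (exfalso; omega)

lemma sum_one_supp {n : ℕ} (f : Fin n → ℝ) (a : Fin n)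
    (h0 : ∀ k, k ≠ a → f k = 0) : ∑ k, f k = f a :=
  Finset.sum_eq_single_of_mem a (Finset.mem_univ a) (fun b _ hb => h0 b hb)

lemma sum_two_supp {n : ℕ} (f : Fin n → ℝ) (a b : Fin n) (hab : a ≠ b)
    (h0 : ∀ k, k ≠ a → k ≠ b → f k = 0) : ∑ k, f k = f a + f b := by
  classical
  have hfk : ∀ k, f k = (if k = a then f a else 0) + (if k = b then f b else 0) := by
    intro k
    by_cases h1 : k = a
    · subst h1; simp [hab]
    · by_cases h2 : k = b
      · subst h2; simp [h1]
      · simp [h1, h2, h0 k h1 h2]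
  rw [Finset.sum_congr rfl (fun k _ => hfk k), Finset.sum_add_distrib]
  simp


lemma Pc1 {m jv : ℕ} (hj : jv < m) (ha : m+1+jv < 2*m+1) (hb : jv < 2*m+1) :
    Pmat m ⟨m+1+jv, ha⟩ ⟨jv, hb⟩ = (Real.sqrt 2)⁻¹ := by
  simp only [Pmat, Matrix.of_apply, Fin.val_mk]
  rw [if_pos hj, if_pos trivial]

lemma Pc2 {m jv : ℕ} (hj : jv < m) (ha : m-1-jv < 2*m+1) (hb : jv < 2*m+1) :
    Pmat m ⟨m-1-jv, ha⟩ ⟨jv, hb⟩ = -(Real.sqrt 2)⁻¹ := by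
  simp only [Pmat, Matrix.of_apply, Fin.val_mk]
  rw [if_pos hj, if_neg (by omega), if_pos (by omega)]

lemma Pc3 {m jv : ℕ} (hj1 : ¬ jv < m) (hj2 : jv < 2*m) (ha : 3*m-jv < 2*m+1) (hb : jv < 2*m+1) :
    Pmat m ⟨3*m-jv, ha⟩ ⟨jv, hb⟩ = (Real.sqrt 2)⁻¹ := by
  simp only [Pmat, Matrix.of_apply, Fin.val_mk]
  rw [if_neg hj1, if_pos hj2, if_pos (by omega)]

lemma Pc4 {m jv : ℕ} (hj1 : ¬ jv < m) (hj2 : jv < 2*m) (ha : jv-m < 2*m+1) (hb : jv < 2*m+1) :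
    Pmat m ⟨jv-m, ha⟩ ⟨jv, hb⟩ = (Real.sqrt 2)⁻¹ := by
  simp only [Pmat, Matrix.of_apply, Fin.val_mk]
  rw [if_neg hj1, if_pos hj2, if_neg (by omega), if_pos (by omega)]

lemma Pc5 {m jv : ℕ} (hm : 1 ≤ m) (hj2 : ¬ jv < 2*m) (ha : m < 2*m+1) (hb : jv < 2*m+1) :
    Pmat m ⟨m, ha⟩ ⟨jv, hb⟩ = 1 := by
  simp only [Pmat, Matrix.of_apply, Fin.val_mk]
  rw [if_neg (by omega), if_neg (by omega), if_pos trivial]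

lemma Pr1 {m iv : ℕ} (hi : iv < m) (ha : iv < 2*m+1) (hb : m-1-iv < 2*m+1) :
    Pmat m ⟨iv, ha⟩ ⟨m-1-iv, hb⟩ = -(Real.sqrt 2)⁻¹ := by
  simp only [Pmat, Matrix.of_apply, Fin.val_mk]
  rw [if_pos (by omega), if_neg (by omega), if_pos (by omega)]

lemma Pr2 {m iv : ℕ} (hi : iv < m) (ha : iv < 2*m+1) (hb : m+iv < 2*m+1) :
    Pmat m ⟨iv, ha⟩ ⟨m+iv, hb⟩ = (Real.sqrt 2)⁻¹ := by
  simp only [Pmat, Matrix.of_apply, Fin.val_mk]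
  rw [if_neg (by omega), if_pos (by omega), if_neg (by omega), if_pos (by omega)]

lemma Pr3 {m iv : ℕ} (hi : m < iv) (ha : iv < 2*m+1) (hb : iv-m-1 < 2*m+1) :
    Pmat m ⟨iv, ha⟩ ⟨iv-m-1, hb⟩ = (Real.sqrt 2)⁻¹ := by
  simp only [Pmat, Matrix.of_apply, Fin.val_mk]
  rw [if_pos (by omega), if_pos (by omega)]

lemma Pr4 {m iv : ℕ} (hi : m < iv) (ha : iv < 2*m+1) (hb : 3*m-iv < 2*m+1) :
    Pmat m ⟨iv, ha⟩ ⟨3*m-iv, hb⟩ = (Real.sqrt 2)⁻¹ := by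
  simp only [Pmat, Matrix.of_apply, Fin.val_mk]
  rw [if_neg (by omega), if_pos (by omega), if_pos (by omega)]

lemma Pr5 {m iv : ℕ} (hi1 : ¬ iv < m) (hi2 : ¬ m < iv) (ha : iv < 2*m+1) (hb : 2*m < 2*m+1) :
    Pmat m ⟨iv, ha⟩ ⟨2*m, hb⟩ = 1 := by
  simp only [Pmat, Matrix.of_apply, Fin.val_mk]
  rw [if_neg (by omega), if_neg (by omega), if_pos (by omega)]

lemma Dmat_ll (m : ℕ) (x : Fin m → ℝ) (y h : ℝ) {a b : ℕ} (ha : a < m) (hb : b < m)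
    (ha' : a < 2*m+1) (hb' : b < 2*m+1) :
    Dmat m x y h ⟨a, ha'⟩ ⟨b, hb'⟩ = tridiag m x h ⟨a, ha⟩ ⟨b, hb⟩ := by
  simp only [Dmat, Matrix.of_apply, Fin.val_mk]
  rw [dif_pos ha, dif_pos hb]

lemma Dmat_lr (m : ℕ) (x : Fin m → ℝ) (y h : ℝ) {a b : ℕ} (ha : a < m) (hb : ¬ b < m)
    (ha' : a < 2*m+1) (hb' : b < 2*m+1) :
    Dmat m x y h ⟨a, ha'⟩ ⟨b, hb'⟩ = 0 := by
  simp only [Dmat, Matrix.of_apply, Fin.val_mk]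
  rw [dif_pos ha, dif_neg hb]

lemma Dmat_rl (m : ℕ) (x : Fin m → ℝ) (y h : ℝ) {a b : ℕ} (ha : ¬ a < m) (hb : b < m)
    (ha' : a < 2*m+1) (hb' : b < 2*m+1) :
    Dmat m x y h ⟨a, ha'⟩ ⟨b, hb'⟩ = 0 := by
  simp only [Dmat, Matrix.of_apply, Fin.val_mk]
  rw [dif_neg ha, dif_pos hb]

lemma Dmat_rr (m : ℕ) (x : Fin m → ℝ) (y h : ℝ) {a b : ℕ} (ha : ¬ a < m) (hb : ¬ b < m)
    (ha' : a < 2*m+1) (hb' : b < 2*m+1) (pa : a - m < m+1) (pb : b - m < m+1) :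
    Dmat m x y h ⟨a, ha'⟩ ⟨b, hb'⟩ = Bplus m x y h ⟨a-m, pa⟩ ⟨b-m, pb⟩ := by
  simp only [Dmat, Matrix.of_apply, Fin.val_mk]
  rw [dif_neg ha, dif_neg hb]

set_option maxHeartbeats 4000000 in
lemma HP_eq_PD (m : ℕ) (hm : 1 ≤ m) (x : Fin m → ℝ) (y h : ℝ) :
    tridiag (2*m+1) (symWord m x y) h * Pmat m = Pmat m * Dmat m x y h := by
  have hs0 : Real.sqrt 2 ≠ 0 := by positivity
  have h2 : Real.sqrt 2 * Real.sqrt 2 = 2 := Real.mul_self_sqrt (by norm_num)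
  have hc1 : (Real.sqrt 2)⁻¹ * Real.sqrt 2 = 1 := inv_mul_cancel₀ hs0
  ext i j
  rcases i with ⟨iv, hiv⟩
  rcases j with ⟨jv, hjv⟩
  rw [Matrix.mul_apply, Matrix.mul_apply]
  by_cases hi1 : iv < m
  · by_cases hj1 : jv < m
    · -- i lt, j lt
      rw [sum_two_supp (fun k => tridiag (2*m+1) (symWord m x y) h ⟨iv, hiv⟩ k * Pmat m k ⟨jv, hjv⟩)
          ⟨m + 1 + jv, by omega⟩ ⟨m - 1 - jv, by omega⟩
          (by simp only [ne_eq, Fin.mk.injEq]; omega)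
          (fun k hk1 hk2 => mul_eq_zero_of_right _
            (Pcol_lt hj1 hjv k (fun hv => hk1 (Fin.ext hv)) (fun hv => hk2 (Fin.ext hv))))]
      rw [Pc1 hj1, Pc2 hj1]
      rw [sum_two_supp (fun k => Pmat m ⟨iv, hiv⟩ k * Dmat m x y h k ⟨jv, hjv⟩)
          ⟨m - 1 - iv, by omega⟩ ⟨m + iv, by omega⟩
          (by simp only [ne_eq, Fin.mk.injEq]; omega)
          (fun k hk1 hk2 => mul_eq_zero_of_left
            (Prow_lt hi1 hiv k (fun hv => hk1 (Fin.ext hv)) (fun hv => hk2 (Fin.ext hv))) _)]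
      rw [Pr1 hi1, Pr2 hi1]
      rw [Dmat_ll m x y h (by omega) hj1, Dmat_rl m x y h (by omega) hj1]
      simp only [tridiag, symWord, Bplus, Matrix.of_apply, Fin.mk.injEq, Fin.val_mk,
        show m + iv - m = iv from by omega]
      split_ifs <;>
          first
            | (exfalso; omega)
            | ring1
            | linear_combination h * hc1
            | linear_combination (-h) * hc1
            | linear_combination (h*Real.sqrt 2)*hc1 - (h*(Real.sqrt 2)⁻¹)*h2
            | linear_combination ((-h)*Real.sqrt 2)*hc1 + (h*(Real.sqrt 2)⁻¹)*h2
    · by_cases hj2 : jv < 2*m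
      · -- i lt, j mid
        rw [sum_two_supp (fun k => tridiag (2*m+1) (symWord m x y) h ⟨iv, hiv⟩ k * Pmat m k ⟨jv, hjv⟩)
            ⟨3*m - jv, by omega⟩ ⟨jv - m, by omega⟩
            (by simp only [ne_eq, Fin.mk.injEq]; omega)
            (fun k hk1 hk2 => mul_eq_zero_of_right _
              (Pcol_mid hj1 hj2 hjv k (fun hv => hk1 (Fin.ext hv)) (fun hv => hk2 (Fin.ext hv))))]
        rw [Pc3 hj1 hj2, Pc4 hj1 hj2]
        rw [sum_two_supp (fun k => Pmat m ⟨iv, hiv⟩ k * Dmat m x y h k ⟨jv, hjv⟩)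
            ⟨m - 1 - iv, by omega⟩ ⟨m + iv, by omega⟩
            (by simp only [ne_eq, Fin.mk.injEq]; omega)
            (fun k hk1 hk2 => mul_eq_zero_of_left
              (Prow_lt hi1 hiv k (fun hv => hk1 (Fin.ext hv)) (fun hv => hk2 (Fin.ext hv))) _)]
        rw [Pr1 hi1, Pr2 hi1]
        rw [Dmat_lr m x y h (by omega) (by omega), Dmat_rr m x y h (by omega) (by omega) (by omega) (by omega) (by omega) (by omega)]
        simp only [tridiag, symWord, Bplus, Matrix.of_apply, Fin.mk.injEq, Fin.val_mk,
          show m + iv - m = iv from by omega]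
        split_ifs <;>
            first
              | (exfalso; omega)
              | ring1
              | linear_combination h * hc1
              | linear_combination (-h) * hc1
              | linear_combination (h*Real.sqrt 2)*hc1 - (h*(Real.sqrt 2)⁻¹)*h2
              | linear_combination ((-h)*Real.sqrt 2)*hc1 + (h*(Real.sqrt 2)⁻¹)*h2
      · -- i lt, j top
        rw [sum_one_supp (fun k => tridiag (2*m+1) (symWord m x y) h ⟨iv, hiv⟩ k * Pmat m k ⟨jv, hjv⟩)
            ⟨m, by omega⟩
            (fun k hk1 => mul_eq_zero_of_right _
              (Pcol_top hj2 hjv k (fun hv => hk1 (Fin.ext hv))))]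
        rw [Pc5 hm hj2]
        rw [sum_two_supp (fun k => Pmat m ⟨iv, hiv⟩ k * Dmat m x y h k ⟨jv, hjv⟩)
            ⟨m - 1 - iv, by omega⟩ ⟨m + iv, by omega⟩
            (by simp only [ne_eq, Fin.mk.injEq]; omega)
            (fun k hk1 hk2 => mul_eq_zero_of_left
              (Prow_lt hi1 hiv k (fun hv => hk1 (Fin.ext hv)) (fun hv => hk2 (Fin.ext hv))) _)]
        rw [Pr1 hi1, Pr2 hi1]
        rw [Dmat_lr m x y h (by omega) (by omega), Dmat_rr m x y h (by omega) (by omega) (by omega) (by omega) (by omega) (by omega)]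
        simp only [tridiag, symWord, Bplus, Matrix.of_apply, Fin.mk.injEq, Fin.val_mk,
          show m + iv - m = iv from by omega]
        split_ifs <;>
            first
              | (exfalso; omega)
              | ring1
              | linear_combination h * hc1
              | linear_combination (-h) * hc1
              | linear_combination (h*Real.sqrt 2)*hc1 - (h*(Real.sqrt 2)⁻¹)*h2
              | linear_combination ((-h)*Real.sqrt 2)*hc1 + (h*(Real.sqrt 2)⁻¹)*h2
  · by_cases hi2 : m < iv
    · by_cases hj1 : jv < m
      · -- i gt, j lt
        rw [sum_two_supp (fun k => tridiag (2*m+1) (symWord m x y) h ⟨iv, hiv⟩ k * Pmat m k ⟨jv, hjv⟩)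
            ⟨m + 1 + jv, by omega⟩ ⟨m - 1 - jv, by omega⟩
            (by simp only [ne_eq, Fin.mk.injEq]; omega)
            (fun k hk1 hk2 => mul_eq_zero_of_right _
              (Pcol_lt hj1 hjv k (fun hv => hk1 (Fin.ext hv)) (fun hv => hk2 (Fin.ext hv))))]
        rw [Pc1 hj1, Pc2 hj1]
        rw [sum_two_supp (fun k => Pmat m ⟨iv, hiv⟩ k * Dmat m x y h k ⟨jv, hjv⟩)
            ⟨iv - m - 1, by omega⟩ ⟨3*m - iv, by omega⟩
            (by simp only [ne_eq, Fin.mk.injEq]; omega)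
            (fun k hk1 hk2 => mul_eq_zero_of_left
              (Prow_gt hi2 hiv k (fun hv => hk1 (Fin.ext hv)) (fun hv => hk2 (Fin.ext hv))) _)]
        rw [Pr3 hi2, Pr4 hi2]
        rw [Dmat_ll m x y h (by omega) hj1, Dmat_rl m x y h (by omega) hj1]
        simp only [tridiag, symWord, Bplus, Matrix.of_apply, Fin.mk.injEq, Fin.val_mk,
          show m - 1 - (3*m - iv - m) = iv - m - 1 from by omega]
        split_ifs <;>
            first
              | (exfalso; omega)
              | ring1
              | linear_combination h * hc1
              | linear_combination (-h) * hc1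
              | linear_combination (h*Real.sqrt 2)*hc1 - (h*(Real.sqrt 2)⁻¹)*h2
              | linear_combination ((-h)*Real.sqrt 2)*hc1 + (h*(Real.sqrt 2)⁻¹)*h2
      · by_cases hj2 : jv < 2*m
        · -- i gt, j mid
          rw [sum_two_supp (fun k => tridiag (2*m+1) (symWord m x y) h ⟨iv, hiv⟩ k * Pmat m k ⟨jv, hjv⟩)
              ⟨3*m - jv, by omega⟩ ⟨jv - m, by omega⟩
              (by simp only [ne_eq, Fin.mk.injEq]; omega)
              (fun k hk1 hk2 => mul_eq_zero_of_right _
                (Pcol_mid hj1 hj2 hjv k (fun hv => hk1 (Fin.ext hv)) (fun hv => hk2 (Fin.ext hv))))]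
          rw [Pc3 hj1 hj2, Pc4 hj1 hj2]
          rw [sum_two_supp (fun k => Pmat m ⟨iv, hiv⟩ k * Dmat m x y h k ⟨jv, hjv⟩)
              ⟨iv - m - 1, by omega⟩ ⟨3*m - iv, by omega⟩
              (by simp only [ne_eq, Fin.mk.injEq]; omega)
              (fun k hk1 hk2 => mul_eq_zero_of_left
                (Prow_gt hi2 hiv k (fun hv => hk1 (Fin.ext hv)) (fun hv => hk2 (Fin.ext hv))) _)]
          rw [Pr3 hi2, Pr4 hi2]
          rw [Dmat_lr m x y h (by omega) (by omega), Dmat_rr m x y h (by omega) (by omega) (by omega) (by omega) (by omega) (by omega)]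
          simp only [tridiag, symWord, Bplus, Matrix.of_apply, Fin.mk.injEq, Fin.val_mk,
            show m - 1 - (3*m - iv - m) = iv - m - 1 from by omega]
          split_ifs <;>
              first
                | (exfalso; omega)
                | ring1
                | linear_combination h * hc1
                | linear_combination (-h) * hc1
                | linear_combination (h*Real.sqrt 2)*hc1 - (h*(Real.sqrt 2)⁻¹)*h2
                | linear_combination ((-h)*Real.sqrt 2)*hc1 + (h*(Real.sqrt 2)⁻¹)*h2
        · -- i gt, j top
          rw [sum_one_supp (fun k => tridiag (2*m+1) (symWord m x y) h ⟨iv, hiv⟩ k * Pmat m k ⟨jv, hjv⟩)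
              ⟨m, by omega⟩
              (fun k hk1 => mul_eq_zero_of_right _
                (Pcol_top hj2 hjv k (fun hv => hk1 (Fin.ext hv))))]
          rw [Pc5 hm hj2]
          rw [sum_two_supp (fun k => Pmat m ⟨iv, hiv⟩ k * Dmat m x y h k ⟨jv, hjv⟩)
              ⟨iv - m - 1, by omega⟩ ⟨3*m - iv, by omega⟩
              (by simp only [ne_eq, Fin.mk.injEq]; omega)
              (fun k hk1 hk2 => mul_eq_zero_of_left
                (Prow_gt hi2 hiv k (fun hv => hk1 (Fin.ext hv)) (fun hv => hk2 (Fin.ext hv))) _)]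
          rw [Pr3 hi2, Pr4 hi2]
          rw [Dmat_lr m x y h (by omega) (by omega), Dmat_rr m x y h (by omega) (by omega) (by omega) (by omega) (by omega) (by omega)]
          simp only [tridiag, symWord, Bplus, Matrix.of_apply, Fin.mk.injEq, Fin.val_mk,
            show m - 1 - (3*m - iv - m) = iv - m - 1 from by omega]
          split_ifs <;>
              first
                | (exfalso; omega)
                | ring1
                | linear_combination h * hc1
                | linear_combination (-h) * hc1
                | linear_combination (h*Real.sqrt 2)*hc1 - (h*(Real.sqrt 2)⁻¹)*h2
                | linear_combination ((-h)*Real.sqrt 2)*hc1 + (h*(Real.sqrt 2)⁻¹)*h2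
    · by_cases hj1 : jv < m
      · -- i mid, j lt
        rw [sum_two_supp (fun k => tridiag (2*m+1) (symWord m x y) h ⟨iv, hiv⟩ k * Pmat m k ⟨jv, hjv⟩)
            ⟨m + 1 + jv, by omega⟩ ⟨m - 1 - jv, by omega⟩
            (by simp only [ne_eq, Fin.mk.injEq]; omega)
            (fun k hk1 hk2 => mul_eq_zero_of_right _
              (Pcol_lt hj1 hjv k (fun hv => hk1 (Fin.ext hv)) (fun hv => hk2 (Fin.ext hv))))]
        rw [Pc1 hj1, Pc2 hj1]
        rw [sum_one_supp (fun k => Pmat m ⟨iv, hiv⟩ k * Dmat m x y h k ⟨jv, hjv⟩)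
            ⟨2*m, by omega⟩
            (fun k hk1 => mul_eq_zero_of_left
              (Prow_mid hi1 hi2 hiv k (fun hv => hk1 (Fin.ext hv))) _)]
        rw [Pr5 hi1 hi2]
        rw [Dmat_rl m x y h (by omega) hj1]
        simp only [tridiag, symWord, Bplus, Matrix.of_apply, Fin.mk.injEq, Fin.val_mk]
        split_ifs <;>
            first
              | (exfalso; omega)
              | ring1
              | linear_combination h * hc1
              | linear_combination (-h) * hc1
              | linear_combination (h*Real.sqrt 2)*hc1 - (h*(Real.sqrt 2)⁻¹)*h2
              | linear_combination ((-h)*Real.sqrt 2)*hc1 + (h*(Real.sqrt 2)⁻¹)*h2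
      · by_cases hj2 : jv < 2*m
        · -- i mid, j mid
          rw [sum_two_supp (fun k => tridiag (2*m+1) (symWord m x y) h ⟨iv, hiv⟩ k * Pmat m k ⟨jv, hjv⟩)
              ⟨3*m - jv, by omega⟩ ⟨jv - m, by omega⟩
              (by simp only [ne_eq, Fin.mk.injEq]; omega)
              (fun k hk1 hk2 => mul_eq_zero_of_right _
                (Pcol_mid hj1 hj2 hjv k (fun hv => hk1 (Fin.ext hv)) (fun hv => hk2 (Fin.ext hv))))]
          rw [Pc3 hj1 hj2, Pc4 hj1 hj2]
          rw [sum_one_supp (fun k => Pmat m ⟨iv, hiv⟩ k * Dmat m x y h k ⟨jv, hjv⟩)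
              ⟨2*m, by omega⟩
              (fun k hk1 => mul_eq_zero_of_left
                (Prow_mid hi1 hi2 hiv k (fun hv => hk1 (Fin.ext hv))) _)]
          rw [Pr5 hi1 hi2]
          rw [Dmat_rr m x y h (by omega) (by omega) (by omega) (by omega) (by omega) (by omega)]
          simp only [tridiag, symWord, Bplus, Matrix.of_apply, Fin.mk.injEq, Fin.val_mk]
          split_ifs <;>
              first
                | (exfalso; omega)
                | ring1
                | linear_combination h * hc1
                | linear_combination (-h) * hc1
                | linear_combination (h*Real.sqrt 2)*hc1 - (h*(Real.sqrt 2)⁻¹)*h2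
                | linear_combination ((-h)*Real.sqrt 2)*hc1 + (h*(Real.sqrt 2)⁻¹)*h2
        · -- i mid, j top
          rw [sum_one_supp (fun k => tridiag (2*m+1) (symWord m x y) h ⟨iv, hiv⟩ k * Pmat m k ⟨jv, hjv⟩)
              ⟨m, by omega⟩
              (fun k hk1 => mul_eq_zero_of_right _
                (Pcol_top hj2 hjv k (fun hv => hk1 (Fin.ext hv))))]
          rw [Pc5 hm hj2]
          rw [sum_one_supp (fun k => Pmat m ⟨iv, hiv⟩ k * Dmat m x y h k ⟨jv, hjv⟩)
              ⟨2*m, by omega⟩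
              (fun k hk1 => mul_eq_zero_of_left
                (Prow_mid hi1 hi2 hiv k (fun hv => hk1 (Fin.ext hv))) _)]
          rw [Pr5 hi1 hi2]
          rw [Dmat_rr m x y h (by omega) (by omega) (by omega) (by omega) (by omega) (by omega)]
          simp only [tridiag, symWord, Bplus, Matrix.of_apply, Fin.mk.injEq, Fin.val_mk]
          split_ifs <;>
              first
                | (exfalso; omega)
                | ring1
                | linear_combination h * hc1
                | linear_combination (-h) * hc1
                | linear_combination (h*Real.sqrt 2)*hc1 - (h*(Real.sqrt 2)⁻¹)*h2
                | linear_combination ((-h)*Real.sqrt 2)*hc1 + (h*(Real.sqrt 2)⁻¹)*h2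

open Polynomial in
lemma charpoly_similar {n : Type*} [Fintype n] [DecidableEq n]
    (P M Q : Matrix n n ℝ) (hPQ : P * Q = 1) :
    (P * M * Q).charpoly = M.charpoly := by
  have h1 : (P.map C) * (Q.map C) = (1 : Matrix n n ℝ[X]) := by
    rw [← Matrix.map_mul, hPQ, Matrix.map_one _ (map_zero _) (map_one _)]
  have key : Matrix.charmatrix (P * M * Q)
      = (P.map C) * Matrix.charmatrix M * (Q.map C) := by
    unfold Matrix.charmatrix
    rw [Matrix.mul_sub, Matrix.sub_mul]
    congr 1
    · have : (Matrix.scalar n (X : ℝ[X])) = (X : ℝ[X]) • (1 : Matrix n n ℝ[X]) := by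
        simp [Matrix.scalar, Matrix.smul_one_eq_diagonal]
      rw [this, Matrix.mul_smul, mul_one, Matrix.smul_mul, h1]
    · simp only [RingHom.mapMatrix_apply, Matrix.map_mul]
  have h2 : (P.map C).det * (Q.map C).det = 1 := by
    rw [← Matrix.det_mul, h1, Matrix.det_one]
  unfold Matrix.charpoly
  rw [key, Matrix.det_mul, Matrix.det_mul]
  calc (P.map C).det * (Matrix.charmatrix M).det * (Q.map C).det
      = ((P.map C).det * (Q.map C).det) * (Matrix.charmatrix M).det := by ring
    _ = (Matrix.charmatrix M).det := by rw [h2, one_mul]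

open Polynomial in
lemma eig_iff_root {n : ℕ} (M : Matrix (Fin n) (Fin n) ℝ) (μ : ℝ) :
    (∃ ψ : Fin n → ℝ, ψ ≠ 0 ∧ M.mulVec ψ = μ • ψ) ↔ M.charpoly.eval μ = 0 := by
  have hdet : M.charpoly.eval μ = (μ • (1 : Matrix (Fin n) (Fin n) ℝ) - M).det := by
    unfold Matrix.charpoly
    rw [← Polynomial.coe_evalRingHom, RingHom.map_det]
    congr 1
    ext i j
    by_cases hij : i = j
    · subst hij; simp [Matrix.charmatrix_apply_eq, Matrix.one_apply]
    · simp [Matrix.charmatrix_apply_ne _ _ _ hij, Matrix.one_apply_ne hij]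
  rw [hdet, ← Matrix.exists_mulVec_eq_zero_iff]
  constructor
  · rintro ⟨ψ, hψ, hM⟩
    exact ⟨ψ, hψ, by
      rw [Matrix.sub_mulVec, Matrix.smul_mulVec, Matrix.one_mulVec, hM, sub_self]⟩
  · rintro ⟨ψ, hψ, hM⟩
    refine ⟨ψ, hψ, ?_⟩
    rw [Matrix.sub_mulVec, Matrix.smul_mulVec, Matrix.one_mulVec, sub_eq_zero] at hM
    exact hM.symm

def sumEquiv (m : ℕ) : (Fin m ⊕ Fin (m + 1)) ≃ Fin (2 * m + 1) where
  toFun := Sum.elim (fun k => ⟨k.val, by omega⟩) (fun k => ⟨m + k.val, by have := k.isLt; omega⟩)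
  invFun i := if h : i.val < m then Sum.inl ⟨i.val, h⟩
    else Sum.inr ⟨i.val - m, by have := i.isLt; omega⟩
  left_inv := by
    rintro (k | k)
    · simp [k.isLt]
    · have : ¬ (m + k.val < m) := by omega
      simp [this]
  right_inv := by
    intro i
    by_cases h : i.val < m
    · simp [h]
    · simp only [h, dif_neg, not_false_iff, Sum.elim_inr]
      exact Fin.ext (by simp; omega)

lemma Dmat_charpoly (m : ℕ) (x : Fin m → ℝ) (y h : ℝ) :
    (Dmat m x y h).charpoly = (tridiag m x h).charpoly * (Bplus m x y h).charpoly := by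
  have hD : Dmat m x y h
      = Matrix.reindex (sumEquiv m) (sumEquiv m)
          (Matrix.fromBlocks (tridiag m x h) 0 0 (Bplus m x y h)) := by
    ext i j
    simp only [Matrix.reindex_apply, Matrix.submatrix_apply]
    rcases i with ⟨iv, hiv⟩
    rcases j with ⟨jv, hjv⟩
    by_cases hi : iv < m <;> by_cases hj : jv < m <;>
      simp [Dmat, sumEquiv, hi, hj, Matrix.fromBlocks]
  rw [hD, Matrix.charpoly_reindex, Matrix.charpoly_fromBlocks_zero₂₁]

set_option maxHeartbeats 2000000 in
lemma PPt (m : ℕ) (hm : 1 ≤ m) : Pmat m * (Pmat m)ᵀ = 1 := by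
  have h2 : Real.sqrt 2 * Real.sqrt 2 = 2 := Real.mul_self_sqrt (by norm_num)
  have hc : ((Real.sqrt 2)⁻¹ : ℝ) ^ 2 * 2 = 1 := by rw [sq, ← mul_inv, h2]; norm_num
  ext i i'
  rcases i with ⟨iv, hiv⟩
  rcases i' with ⟨iv', hiv'⟩
  rw [Matrix.mul_apply]
  simp only [Matrix.transpose_apply]
  by_cases hi : iv < m
  · rw [sum_two_supp _ ⟨m - 1 - iv, by omega⟩ ⟨m + iv, by omega⟩
      (by simp only [ne_eq, Fin.mk.injEq]; omega)
      (fun k hk1 hk2 => mul_eq_zero_of_left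
        (Prow_lt hi hiv k (fun hv => hk1 (Fin.ext hv)) (fun hv => hk2 (Fin.ext hv))) _)]
    simp only [Pmat, Matrix.of_apply, Matrix.one_apply, Fin.mk.injEq]
    split_ifs <;> first | (exfalso; omega) | ring1 | (linear_combination hc)
  · by_cases hi2 : m < iv
    · rw [sum_two_supp _ ⟨iv - m - 1, by omega⟩ ⟨3*m - iv, by omega⟩
        (by simp only [ne_eq, Fin.mk.injEq]; omega)
        (fun k hk1 hk2 => mul_eq_zero_of_left
          (Prow_gt hi2 hiv k (fun hv => hk1 (Fin.ext hv)) (fun hv => hk2 (Fin.ext hv))) _)]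
      simp only [Pmat, Matrix.of_apply, Matrix.one_apply, Fin.mk.injEq]
      split_ifs <;> first | (exfalso; omega) | ring1 | (linear_combination hc)
    · rw [sum_one_supp _ ⟨2*m, by omega⟩
        (fun k hk1 => mul_eq_zero_of_left
          (Prow_mid hi hi2 hiv k (fun hv => hk1 (Fin.ext hv))) _)]
      simp only [Pmat, Matrix.of_apply, Matrix.one_apply, Fin.mk.injEq]
      split_ifs <;> first | (exfalso; omega) | ring1 | (linear_combination hc)

/-- The characteristic polynomial of `H = [X⁻¹YX]` factors as the
product of the characteristic polynomials of `[X]` and of `B₊`; in particular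
`σ(H) = σ([X]) ∪ σ(B₊)`. -/
theorem stmt5 (m : ℕ) (hm : 1 ≤ m) (x : Fin m → ℝ) (y h : ℝ) :
    (tridiag (2 * m + 1) (symWord m x y) h).charpoly
      = (tridiag m x h).charpoly * (Bplus m x y h).charpoly
    ∧ { μ : ℝ | ∃ ψ : Fin (2 * m + 1) → ℝ, ψ ≠ 0 ∧
          (tridiag (2 * m + 1) (symWord m x y) h).mulVec ψ = μ • ψ }
      = { μ : ℝ | ∃ ψ : Fin m → ℝ, ψ ≠ 0 ∧ (tridiag m x h).mulVec ψ = μ • ψ }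
        ∪ { μ : ℝ | ∃ ψ : Fin (m + 1) → ℝ, ψ ≠ 0 ∧ (Bplus m x y h).mulVec ψ = μ • ψ } := by
  have hPPt : Pmat m * (Pmat m)ᵀ = 1 := PPt m hm
  have hkey : tridiag (2*m+1) (symWord m x y) h * Pmat m = Pmat m * Dmat m x y h :=
    HP_eq_PD m hm x y h
  have hH : tridiag (2*m+1) (symWord m x y) h = Pmat m * Dmat m x y h * (Pmat m)ᵀ := by
    calc tridiag (2*m+1) (symWord m x y) h
        = tridiag (2*m+1) (symWord m x y) h * (Pmat m * (Pmat m)ᵀ) := by rw [hPPt, mul_one]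
      _ = tridiag (2*m+1) (symWord m x y) h * Pmat m * (Pmat m)ᵀ := by rw [mul_assoc]
      _ = Pmat m * Dmat m x y h * (Pmat m)ᵀ := by rw [hkey]
  have part1 : (tridiag (2 * m + 1) (symWord m x y) h).charpoly
      = (tridiag m x h).charpoly * (Bplus m x y h).charpoly := by
    rw [hH, charpoly_similar _ _ _ hPPt, Dmat_charpoly]
  refine ⟨part1, ?_⟩
  ext μ
  simp only [Set.mem_setOf_eq, Set.mem_union]
  rw [eig_iff_root, eig_iff_root, eig_iff_root, part1, Polynomial.eval_mul, mul_eq_zero]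
end
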